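/- arXiv:1010.5226 — 4 statements merged into one kernel-verified Lean document; each statement's English description precedes it below -/
import Mathlib

section
/- The map π: 𝔤 → Cl(𝔤) defined on an orthonormal basis {e_i} of a Lie algebra 𝔤 equipped with an invariant inner product by π(e_a) = -(1/4) Σ_{i,j} ⟨[e_i,e_j], e_a⟩ e_i e_j is a Lie algebra homomorphism, i.e., π([x,y]) = π(x)π(y) - π(y)π(x) for all x, y ∈ 𝔤. -/
open CliffordAlgebra

/-- Kostant: Let `𝔤` be a real Lie algebra with an invariant inner product `B`
(i.e. `B ⁅a,b⁆ c = -B b ⁅a,c⁆`), orthonormal basis `e`, and let `Cl(𝔤)` be the Clifford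
algebra with relations `ab + ba = 2 B a b` (encoded via the polar form of `Q`).  The map
`π(x) = -(1/4) Σ_{i,j} B ⁅e i, e j⁆ x • (e i * e j)` is a Lie algebra homomorphism:
`π ⁅x,y⁆ = π x * π y - π y * π x`. -/
theorem stmt0 {L : Type*} [LieRing L] [LieAlgebra ℝ L]
    (B : L →ₗ[ℝ] L →ₗ[ℝ] ℝ)
    (hBsymm : ∀ a b : L, B a b = B b a)
    (hBinv : ∀ a b c : L, B ⁅a, b⁆ c = - B b ⁅a, c⁆)
    (Q : QuadraticForm ℝ L)
    (hQ : ∀ a b : L, QuadraticMap.polar Q a b = 2 * B a b)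
    {n : ℕ} (e : Module.Basis (Fin n) ℝ L)
    (horth : ∀ i j, B (e i) (e j) = if i = j then 1 else 0)
    (π : L → CliffordAlgebra Q)
    (hπ : ∀ x : L, π x =
      (-(1 / 4 : ℝ)) • ∑ i, ∑ j, B ⁅e i, e j⁆ x • (ι Q (e i) * ι Q (e j))) :
    ∀ x y : L, π ⁅x, y⁆ = π x * π y - π y * π x := by
  have hcoord : ∀ (z : L) (i : Fin n), B z (e i) = e.repr z i := by
    intro z i
    conv_lhs => rw [← e.sum_repr z]
    simp [horth, Finset.sum_ite_eq', -Module.Basis.sum_repr]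
  have hrepr : ∀ z : L, ∑ i, B z (e i) • e i = z := by
    intro z
    conv_rhs => rw [← e.sum_repr z]
    exact Finset.sum_congr rfl fun i _ => by rw [hcoord]
  have hdot : ∀ z w : L, ∑ i, B z (e i) * B w (e i) = B z w := by
    intro z w
    conv_rhs => rw [← hrepr w]
    simp [mul_comm]
  have key : ∀ v w : L, ι Q v * ι Q w = algebraMap ℝ _ (2 * B v w) - ι Q w * ι Q v := by
    intro v w
    rw [← hQ]
    exact eq_sub_of_add_eq (ι_mul_ι_add_swap v w)
  have comm1 : ∀ (v : L) (i j : Fin n),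
      (ι Q (e i) * ι Q (e j)) * ι Q v - ι Q v * (ι Q (e i) * ι Q (e j)) =
        (2 * B v (e j)) • ι Q (e i) - (2 * B v (e i)) • ι Q (e j) := by
    intro v i j
    rw [show ι Q v * (ι Q (e i) * ι Q (e j)) = (ι Q v * ι Q (e i)) * ι Q (e j) from
      (mul_assoc _ _ _).symm, key v (e i), sub_mul, mul_assoc (ι Q (e i)) (ι Q v) (ι Q (e j)), key v (e j)]
    simp only [mul_sub, sub_mul, mul_assoc, Algebra.algebraMap_eq_smul_one, smul_mul_assoc,
      mul_smul_comm, one_mul, mul_one, hBsymm v (e i), hBsymm v (e j)]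
    abel
  have hcyc : ∀ a b c : L, B ⁅a, b⁆ c = B ⁅c, a⁆ b := by
    intro a b c
    rw [hBinv, hBsymm, ← lie_skew a c, map_neg]
    simp
  have Llevel : ∀ z v : L,
      (-(1/4 : ℝ)) • ∑ i, ∑ j, B ⁅e i, e j⁆ z •
        ((2 * B v (e j)) • e i - (2 * B v (e i)) • e j) = ⁅z, v⁆ := by
    intro z v
    have h1 : ∀ i : Fin n, ∑ j, B ⁅e i, e j⁆ z • ((2 * B v (e j)) • e i)
        = (2 * B ⁅v, z⁆ (e i)) • e i := by
      intro i
      simp only [smul_smul]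
      rw [← Finset.sum_smul]
      congr 1
      calc ∑ j, B ⁅e i, e j⁆ z * (2 * B v (e j))
          = 2 * ∑ j, B ⁅z, e i⁆ (e j) * B v (e j) := by
            rw [Finset.mul_sum]
            exact Finset.sum_congr rfl fun j _ => by rw [hcyc (e i) (e j) z]; ring
        _ = 2 * B ⁅z, e i⁆ v := by rw [hdot]
        _ = 2 * B ⁅v, z⁆ (e i) := by rw [hcyc]
    have h2 : ∀ j : Fin n, ∑ i, B ⁅e i, e j⁆ z • ((2 * B v (e i)) • e j)
        = (2 * B ⁅z, v⁆ (e j)) • e j := by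
      intro j
      simp only [smul_smul]
      rw [← Finset.sum_smul]
      congr 1
      calc ∑ i, B ⁅e i, e j⁆ z * (2 * B v (e i))
          = 2 * ∑ i, B ⁅e j, z⁆ (e i) * B v (e i) := by
            rw [Finset.mul_sum]
            refine Finset.sum_congr rfl fun i _ => ?_
            rw [hcyc (e i) (e j) z, hcyc z (e i) (e j)]; ring
        _ = 2 * B ⁅e j, z⁆ v := by rw [hdot]
        _ = 2 * B ⁅z, v⁆ (e j) := by rw [hcyc (e j) z v, hcyc v (e j) z]
    have step : ∑ i, ∑ j, B ⁅e i, e j⁆ z •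
          ((2 * B v (e j)) • e i - (2 * B v (e i)) • e j)
        = (2:ℝ) • ⁅v, z⁆ - (2:ℝ) • ⁅z, v⁆ := by
      simp only [smul_sub, Finset.sum_sub_distrib]
      congr 1
      · rw [show (2:ℝ) • ⁅v,z⁆ = ∑ i, (2 * B ⁅v, z⁆ (e i)) • e i from ?_]
        · exact Finset.sum_congr rfl fun i _ => h1 i
        · simp only [mul_smul, ← Finset.smul_sum, hrepr]
      · rw [Finset.sum_comm]
        rw [show (2:ℝ) • ⁅z,v⁆ = ∑ j, (2 * B ⁅z, v⁆ (e j)) • e j from ?_]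
        · exact Finset.sum_congr rfl fun j _ => h2 j
        · simp only [mul_smul, ← Finset.smul_sum, hrepr]
    rw [step, ← lie_skew z v]
    module
  have picomm : ∀ z v : L, π z * ι Q v - ι Q v * π z = ι Q ⁅z, v⁆ := by
    intro z v
    have expand : π z * ι Q v - ι Q v * π z
        = (-(1/4:ℝ)) • ∑ i, ∑ j, B ⁅e i, e j⁆ z •
            ((2 * B v (e j)) • ι Q (e i) - (2 * B v (e i)) • ι Q (e j)) := by
      rw [hπ z, smul_mul_assoc, mul_smul_comm, ← smul_sub]
      congr 1
      rw [Finset.sum_mul, Finset.mul_sum, ← Finset.sum_sub_distrib]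
      refine Finset.sum_congr rfl fun i _ => ?_
      rw [Finset.sum_mul, Finset.mul_sum, ← Finset.sum_sub_distrib]
      refine Finset.sum_congr rfl fun j _ => ?_
      rw [smul_mul_assoc, mul_smul_comm, ← smul_sub, comm1]
    rw [expand, ← Llevel z v]
    simp only [map_smul, map_sum, map_sub]
  have hiota : ∀ w : L, ι Q w = ∑ k, B w (e k) • ι Q (e k) := by
    intro w
    conv_lhs => rw [← hrepr w]
    rw [map_sum]
    exact Finset.sum_congr rfl fun k _ => by rw [map_smul]
  intro x y
  have picomm' : ∀ v : L, π x * ι Q v = ι Q v * π x + ι Q ⁅x, v⁆ := by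
    intro v
    rw [← picomm x v]
    abel
  have comm2 : ∀ i j : Fin n,
      π x * (ι Q (e i) * ι Q (e j)) - (ι Q (e i) * ι Q (e j)) * π x
        = ι Q ⁅x, e i⁆ * ι Q (e j) + ι Q (e i) * ι Q ⁅x, e j⁆ := by
    intro i j
    rw [← mul_assoc, picomm' (e i), add_mul, mul_assoc, picomm' (e j), mul_add, ← mul_assoc]
    abel
  have hs1 : ∀ k l : Fin n,
      ∑ i, B ⁅e i, e l⁆ y * B ⁅x, e i⁆ (e k) = -(B ⁅e l, y⁆ ⁅x, e k⁆) := by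
    intro k l
    have h : ∀ i, B ⁅e i, e l⁆ y * B ⁅x, e i⁆ (e k)
        = -(B ⁅e l, y⁆ (e i) * B ⁅x, e k⁆ (e i)) := by
      intro i
      rw [hcyc (e i) (e l) y, hcyc y (e i) (e l), hBinv x (e i) (e k),
        hBsymm (e i) ⁅x, e k⁆]
      ring
    rw [Finset.sum_congr rfl fun i _ => h i, Finset.sum_neg_distrib, hdot]
  have hs2 : ∀ k l : Fin n,
      ∑ j, B ⁅e k, e j⁆ y * B ⁅x, e j⁆ (e l) = B ⁅e k, y⁆ ⁅x, e l⁆ := by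
    intro k l
    have h : ∀ j, B ⁅e k, e j⁆ y * B ⁅x, e j⁆ (e l)
        = B ⁅e k, y⁆ (e j) * B ⁅x, e l⁆ (e j) := by
      intro j
      rw [hcyc (e k) (e j) y, hBinv x (e j) (e l), hBsymm (e j) ⁅x, e l⁆,
        show ⁅y, e k⁆ = -⁅e k, y⁆ from (lie_skew _ _).symm, map_neg,
        LinearMap.neg_apply]
      ring
    rw [Finset.sum_congr rfl fun j _ => h j, hdot]
  have hN : ∀ k l : Fin n,
      B ⁅e k, e l⁆ ⁅x, y⁆ = -(B ⁅e l, y⁆ ⁅x, e k⁆) + B ⁅e k, y⁆ ⁅x, e l⁆ := by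
    intro k l
    rw [hBinv (e k) (e l) ⁅x, y⁆, leibniz_lie (e k) x y, map_add]
    have hA : B (e l) ⁅⁅e k, x⁆, y⁆ = B ⁅e l, y⁆ ⁅x, e k⁆ := by
      rw [hBsymm (e l) _, hcyc ⁅e k, x⁆ y (e l), hBinv (e l) ⁅e k, x⁆ y,
        hBsymm ⁅e k, x⁆ ⁅e l, y⁆,
        show ⁅e k, x⁆ = -⁅x, e k⁆ from (lie_skew _ _).symm, map_neg, neg_neg]
    have hB2 : B (e l) ⁅x, ⁅e k, y⁆⁆ = -(B ⁅e k, y⁆ ⁅x, e l⁆) := by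
      rw [hBsymm (e l) _, hcyc x ⁅e k, y⁆ (e l), hBsymm ⁅e l, x⁆ ⁅e k, y⁆,
        show ⁅e l, x⁆ = -⁅x, e l⁆ from (lie_skew _ _).symm, map_neg]
    rw [hA, hB2]
    ring
  have expand2 : π x * π y - π y * π x
      = (-(1/4:ℝ)) • ∑ i, ∑ j, B ⁅e i, e j⁆ y •
          (ι Q ⁅x, e i⁆ * ι Q (e j) + ι Q (e i) * ι Q ⁅x, e j⁆) := by
    conv_lhs => rw [hπ y]
    rw [mul_smul_comm, smul_mul_assoc, ← smul_sub]
    congr 1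
    rw [Finset.mul_sum, Finset.sum_mul, ← Finset.sum_sub_distrib]
    refine Finset.sum_congr rfl fun i _ => ?_
    rw [Finset.mul_sum, Finset.sum_mul, ← Finset.sum_sub_distrib]
    refine Finset.sum_congr rfl fun j _ => ?_
    rw [mul_smul_comm, smul_mul_assoc, ← smul_sub, comm2]
  have swap13 : ∀ (f : Fin n → Fin n → Fin n → CliffordAlgebra Q),
      ∑ i, ∑ j, ∑ k, f i j k = ∑ k, ∑ j, ∑ i, f i j k := by
    intro f
    calc ∑ i, ∑ j, ∑ k, f i j k = ∑ i, ∑ k, ∑ j, f i j k :=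
          Finset.sum_congr rfl fun i _ => Finset.sum_comm
      _ = ∑ k, ∑ i, ∑ j, f i j k := Finset.sum_comm
      _ = ∑ k, ∑ j, ∑ i, f i j k :=
          Finset.sum_congr rfl fun k _ => Finset.sum_comm
  have claimA : ∑ i, ∑ j, B ⁅e i, e j⁆ y • (ι Q ⁅x, e i⁆ * ι Q (e j))
      = ∑ k, ∑ l, (-(B ⁅e l, y⁆ ⁅x, e k⁆)) • (ι Q (e k) * ι Q (e l)) := by
    calc ∑ i, ∑ j, B ⁅e i, e j⁆ y • (ι Q ⁅x, e i⁆ * ι Q (e j))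
        = ∑ i, ∑ j, ∑ k, (B ⁅e i, e j⁆ y * B ⁅x, e i⁆ (e k)) •
            (ι Q (e k) * ι Q (e j)) := by
          refine Finset.sum_congr rfl fun i _ => Finset.sum_congr rfl fun j _ => ?_
          rw [hiota ⁅x, e i⁆, Finset.sum_mul, Finset.smul_sum]
          exact Finset.sum_congr rfl fun k _ => by
            rw [smul_mul_assoc, smul_smul]
      _ = ∑ k, ∑ j, (∑ i, B ⁅e i, e j⁆ y * B ⁅x, e i⁆ (e k)) •
            (ι Q (e k) * ι Q (e j)) := by
          rw [swap13]
          exact Finset.sum_congr rfl fun k _ => Finset.sum_congr rfl fun j _ =>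
            (Finset.sum_smul).symm
      _ = ∑ k, ∑ l, (-(B ⁅e l, y⁆ ⁅x, e k⁆)) • (ι Q (e k) * ι Q (e l)) := by
          exact Finset.sum_congr rfl fun k _ => Finset.sum_congr rfl fun l _ => by
            rw [hs1]
  have claimB : ∑ i, ∑ j, B ⁅e i, e j⁆ y • (ι Q (e i) * ι Q ⁅x, e j⁆)
      = ∑ k, ∑ l, (B ⁅e k, y⁆ ⁅x, e l⁆) • (ι Q (e k) * ι Q (e l)) := by
    calc ∑ i, ∑ j, B ⁅e i, e j⁆ y • (ι Q (e i) * ι Q ⁅x, e j⁆)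
        = ∑ i, ∑ j, ∑ k, (B ⁅e i, e j⁆ y * B ⁅x, e j⁆ (e k)) •
            (ι Q (e i) * ι Q (e k)) := by
          refine Finset.sum_congr rfl fun i _ => Finset.sum_congr rfl fun j _ => ?_
          rw [hiota ⁅x, e j⁆, Finset.mul_sum, Finset.smul_sum]
          exact Finset.sum_congr rfl fun k _ => by
            rw [mul_smul_comm, smul_smul]
      _ = ∑ i, ∑ k, (∑ j, B ⁅e i, e j⁆ y * B ⁅x, e j⁆ (e k)) •
            (ι Q (e i) * ι Q (e k)) := by
          refine Finset.sum_congr rfl fun i _ => ?_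
          rw [Finset.sum_comm]
          exact Finset.sum_congr rfl fun k _ => (Finset.sum_smul).symm
      _ = ∑ k, ∑ l, (B ⁅e k, y⁆ ⁅x, e l⁆) • (ι Q (e k) * ι Q (e l)) := by
          exact Finset.sum_congr rfl fun k _ => Finset.sum_congr rfl fun l _ => by
            rw [hs2]
  rw [hπ ⁅x, y⁆, expand2]
  congr 1
  calc ∑ i, ∑ j, B ⁅e i, e j⁆ ⁅x, y⁆ • (ι Q (e i) * ι Q (e j))
      = ∑ k, ∑ l, ((-(B ⁅e l, y⁆ ⁅x, e k⁆)) • (ι Q (e k) * ι Q (e l))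
          + (B ⁅e k, y⁆ ⁅x, e l⁆) • (ι Q (e k) * ι Q (e l))) := by
        refine Finset.sum_congr rfl fun k _ => Finset.sum_congr rfl fun l _ => ?_
        rw [hN k l, add_smul]
    _ = (∑ k, ∑ l, (-(B ⁅e l, y⁆ ⁅x, e k⁆)) • (ι Q (e k) * ι Q (e l)))
        + ∑ k, ∑ l, (B ⁅e k, y⁆ ⁅x, e l⁆) • (ι Q (e k) * ι Q (e l)) := by
        simp only [Finset.sum_add_distrib]
    _ = ∑ i, ∑ j, B ⁅e i, e j⁆ y •
          (ι Q ⁅x, e i⁆ * ι Q (e j) + ι Q (e i) * ι Q ⁅x, e j⁆) := by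
        rw [← claimA, ← claimB]
        simp only [smul_add, Finset.sum_add_distrib]
end

section
/- In U(𝔤) ⊗ Cl(𝔤), the square of the Dirac element D = (1/√-1) Σ_{i=1}^q e_i ⊗ e_i satisfies D² = Cas ⊗ 1 + 2 Σ_k e_k ⊗ π(e_k), where Cas = -Σ_k e_k e_k is the Casimir and π: 𝔤 → Cl(𝔤) is the Kostant map π(e_a) = -(1/4) Σ_{i,j} ⟨[e_i,e_j], e_a⟩ e_i e_j. -/
open CliffordAlgebra
open scoped TensorProduct

/-- In the quantum Weil algebra `W(𝔤) = U(𝔤) ⊗ Cl(𝔤)` of a Lie algebra `𝔤`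
with invariant inner product `B` and orthonormal basis `{e i}`, the Dirac element
`D = (1/√-1) Σ_i e_i ⊗ e_i` satisfies
`D² = Cas ⊗ 1 + 2 Σ_k e_k ⊗ π(e_k)`,
where `Cas = -Σ_k e_k e_k` is the Casimir and `π` is the Kostant map
`π(e_a) = -(1/4) Σ_{i,j} ⟨[e_i,e_j], e_a⟩ e_i e_j`. -/
theorem stmt2 {L : Type*} [LieRing L] [LieAlgebra ℂ L]
    (B : L →ₗ[ℂ] L →ₗ[ℂ] ℂ)
    (hBsymm : ∀ a b : L, B a b = B b a)
    (hBinv : ∀ a b c : L, B ⁅a, b⁆ c = - B b ⁅a, c⁆)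
    (Q : QuadraticForm ℂ L)
    (hQ : ∀ a b : L, QuadraticMap.polar Q a b = 2 * B a b)
    {q : ℕ} (e : Module.Basis (Fin q) ℂ L)
    (horth : ∀ i j, B (e i) (e j) = if i = j then 1 else 0)
    (π : L → CliffordAlgebra Q)
    (hπ : ∀ x : L, π x =
      (-(1 / 4 : ℂ)) • ∑ i, ∑ j, B ⁅e i, e j⁆ x • (ι Q (e i) * ι Q (e j)))
    (D : UniversalEnvelopingAlgebra ℂ L ⊗[ℂ] CliffordAlgebra Q)
    (hD : D = (-Complex.I) •
      ∑ i, (UniversalEnvelopingAlgebra.ι ℂ (e i)) ⊗ₜ[ℂ] (ι Q (e i)))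
    (Cas : UniversalEnvelopingAlgebra ℂ L)
    (hCas : Cas = - ∑ k, UniversalEnvelopingAlgebra.ι ℂ (e k)
        * UniversalEnvelopingAlgebra.ι ℂ (e k)) :
    D * D = Cas ⊗ₜ[ℂ] 1
        + (2 : ℂ) • ∑ k, (UniversalEnvelopingAlgebra.ι ℂ (e k)) ⊗ₜ[ℂ] (π (e k)) := by
  classical
  set u : Fin q → UniversalEnvelopingAlgebra ℂ L :=
    fun i => UniversalEnvelopingAlgebra.ι ℂ (e i) with hu
  set c : Fin q → CliffordAlgebra Q := fun i => ι Q (e i) with hc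
  -- expansion in the orthonormal basis
  have hrep : ∀ x : L, x = ∑ k, B x (e k) • e k := by
    intro x
    have h1 : ∀ k, B x (e k) = e.repr x k := by
      intro k
      conv_lhs => rw [← e.sum_repr x]
      simp [-Module.Basis.sum_repr, horth]
    simp_rw [h1]
    exact (e.sum_repr x).symm
  have hQB : ∀ x : L, Q x = B x x := by
    intro x
    have h := hQ x x
    rw [QuadraticMap.polar_self] at h
    have h2 : (2:ℂ) * Q x = 2 * B x x := by
      simpa [two_smul, two_mul] using h
    exact mul_left_cancel₀ two_ne_zero h2
  have hcc : ∀ i, c i * c i = 1 := by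
    intro i
    simp only [hc]
    rw [ι_sq_scalar, hQB, horth]
    simp
  have hswap : ∀ i j, c i * c j + c j * c i
      = (if i = j then (2:ℂ) else 0) • (1 : CliffordAlgebra Q) := by
    intro i j
    simp only [hc]
    rw [ι_mul_ι_add_swap, hQ, horth]
    split <;> simp [Algebra.algebraMap_eq_smul_one]
  have hcomm : ∀ i j, u i * u j - u j * u i = ∑ k, B ⁅e i, e j⁆ (e k) • u k := by
    intro i j
    letI := LieRing.ofAssociativeRing (A := UniversalEnvelopingAlgebra ℂ L)
    have h1 : UniversalEnvelopingAlgebra.ι ℂ ⁅e i, e j⁆ = u i * u j - u j * u i := by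
      rw [LieHom.map_lie, Ring.lie_def]
    rw [← h1]
    conv_lhs => rw [hrep ⁅e i, e j⁆]
    rw [← LieHom.coe_toLinearMap, map_sum]
    refine Finset.sum_congr rfl fun k _ => ?_
    rw [map_smul]
    rfl
  -- the main double sum
  set S : UniversalEnvelopingAlgebra ℂ L ⊗[ℂ] CliffordAlgebra Q :=
    ∑ i, ∑ j, (u i * u j) ⊗ₜ[ℂ] (c i * c j) with hS
  have hDD : D * D = (-1 : ℂ) • S := by
    rw [hD, smul_mul_assoc, mul_smul_comm, smul_smul]
    have hi : (-Complex.I) * (-Complex.I) = (-1 : ℂ) := by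
      rw [neg_mul_neg, Complex.I_mul_I]
    rw [hi, Finset.sum_mul_sum]
    simp only [Algebra.TensorProduct.tmul_mul_tmul, hS]
    rfl
  have hSswap : S = ∑ i, ∑ j, (u j * u i) ⊗ₜ[ℂ] (c j * c i) := by
    rw [hS, Finset.sum_comm]
  set T : UniversalEnvelopingAlgebra ℂ L ⊗[ℂ] CliffordAlgebra Q :=
    ∑ i, ∑ j, ∑ k, B ⁅e i, e j⁆ (e k) • ((u k) ⊗ₜ[ℂ] (c i * c j)) with hT
  set U : UniversalEnvelopingAlgebra ℂ L ⊗[ℂ] CliffordAlgebra Q :=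
    ∑ i, (u i * u i) ⊗ₜ[ℂ] (1 : CliffordAlgebra Q) with hU
  have h2S : S + S = T + (2:ℂ) • U := by
    nth_rewrite 1 [hSswap]
    nth_rewrite 1 [hS]
    rw [← Finset.sum_add_distrib]
    have key : ∀ i, (∑ j, (u j * u i) ⊗ₜ[ℂ] (c j * c i))
        + (∑ j, (u i * u j) ⊗ₜ[ℂ] (c i * c j))
        = (∑ j, ∑ k, B ⁅e i, e j⁆ (e k) • ((u k) ⊗ₜ[ℂ] (c i * c j)))
          + (2:ℂ) • ((u i * u i) ⊗ₜ[ℂ] (1 : CliffordAlgebra Q)) := by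
      intro i
      rw [← Finset.sum_add_distrib]
      have term : ∀ j, (u j * u i) ⊗ₜ[ℂ] (c j * c i) + (u i * u j) ⊗ₜ[ℂ] (c i * c j)
          = (∑ k, B ⁅e i, e j⁆ (e k) • ((u k) ⊗ₜ[ℂ] (c i * c j)))
            + (if i = j then (2:ℂ) else 0) • ((u j * u i) ⊗ₜ[ℂ] (1 : CliffordAlgebra Q)) := by
        intro j
        have e1 : (u j * u i) ⊗ₜ[ℂ] (c j * c i) + (u i * u j) ⊗ₜ[ℂ] (c i * c j)
            = (u i * u j - u j * u i) ⊗ₜ[ℂ] (c i * c j)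
              + (u j * u i) ⊗ₜ[ℂ] (c i * c j + c j * c i) := by
          rw [TensorProduct.sub_tmul, TensorProduct.tmul_add]
          abel
        rw [e1, hcomm i j, hswap i j, TensorProduct.sum_tmul, TensorProduct.tmul_smul]
        congr 1
      rw [Finset.sum_congr rfl fun j _ => term j, Finset.sum_add_distrib]
      congr 1
      simp
    rw [Finset.sum_congr rfl fun i _ => key i, Finset.sum_add_distrib, ← Finset.smul_sum]
  have hSval : S = (1/2 : ℂ) • T + U := by
    have h2 : (2:ℂ) • S = T + (2:ℂ) • U := by rw [two_smul]; exact h2S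
    have h3 := congrArg (fun x => (1/2 : ℂ) • x) h2
    simpa [smul_smul, smul_add] using h3
  -- the right-hand side
  have hcast : Cas ⊗ₜ[ℂ] (1 : CliffordAlgebra Q) = - U := by
    rw [hCas, hU, TensorProduct.neg_tmul, TensorProduct.sum_tmul]
  have hpis : ∀ k, (u k) ⊗ₜ[ℂ] (π (e k))
      = (-(1/4 : ℂ)) • ∑ i, ∑ j, B ⁅e i, e j⁆ (e k) • ((u k) ⊗ₜ[ℂ] (c i * c j)) := by
    intro k
    rw [hπ, TensorProduct.tmul_smul]
    congr 1
    rw [TensorProduct.tmul_sum]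
    refine Finset.sum_congr rfl fun i _ => ?_
    rw [TensorProduct.tmul_sum]
    exact Finset.sum_congr rfl fun j _ => by rw [TensorProduct.tmul_smul]
  have hTcomm : (∑ k, ∑ i, ∑ j, B ⁅e i, e j⁆ (e k) • ((u k) ⊗ₜ[ℂ] (c i * c j))) = T := by
    rw [hT, Finset.sum_comm]
    exact Finset.sum_congr rfl fun i _ => Finset.sum_comm
  have hRHS : (2 : ℂ) • ∑ k, (u k) ⊗ₜ[ℂ] (π (e k)) = (-(1/2) : ℂ) • T := by
    rw [Finset.sum_congr rfl fun k _ => hpis k, ← Finset.smul_sum, smul_smul, hTcomm]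
    norm_num
  rw [hDD, hSval, hcast, hRHS]
  module
end

section
/- Let {D_j} be a sequence of essentially self-adjoint operators forming an inductive system of spectral triples with isometric connecting maps ι_{jk}: H_j → H_k intertwining D_j and D_k (i.e., ι(Dom(D_j)) ⊂ Dom(D_k) and D_k ∘ ι = ι ∘ D_j). Then the limit operator D defined on the union of domains by Dη = D_n η for η ∈ Dom(D_n) is essentially self-adjoint on the Hilbert space completion of ∪_j H_j. -/
open scoped InnerProductSpace
open LinearPMap Filter Topology

noncomputable section

namespace Stmt8Aux

variable {E : Type*} [NormedAddCommGroup E] [InnerProductSpace ℂ E]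

/-- A continuous functional vanishing on the graph vanishes on the graph of the closure. -/
lemma vanish_on_closure (A : E →ₗ.[ℂ] E) (hA : A.IsClosable) (φ : E × E → ℂ)
    (hc : Continuous φ) (h0 : ∀ x : A.domain, φ ((x : E), A x) = 0) :
    ∀ y : A.closure.domain, φ ((y : E), A.closure y) = 0 := by
  intro y
  have hmem : ((y : E), A.closure y) ∈ A.closure.graph := A.closure.mem_graph y
  rw [← hA.graph_closure_eq_closure_graph] at hmem
  have hsub : closure (A.graph : Set (E × E)) ⊆ {z : E × E | φ z = 0} := by
    apply closure_minimal
    · rintro ⟨a, b⟩ hab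
      rcases A.mem_graph_iff.mp hab with ⟨u, hu1, hu2⟩
      simp only [Set.mem_setOf_eq]
      simp only [] at hu1 hu2
      rw [← hu1, ← hu2, h0 u]
    · exact isClosed_eq hc continuous_const
  have : ((y : E), A.closure y) ∈ closure (A.graph : Set (E × E)) := by
    rwa [← Submodule.topologicalClosure_coe] 
  exact hsub this

/-- Symmetric densely defined operators are closable. -/
lemma isClosable_of_symmetric [CompleteSpace E] {A : E →ₗ.[ℂ] E}
    (hd : Dense (A.domain : Set E)) (hsym : A.IsFormalAdjoint A) :
    A.IsClosable := by
  refine ⟨A.graph.topologicalClosure.toLinearPMap,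
    (Submodule.toLinearPMap_graph_eq _ ?_).symm⟩
  rintro ⟨x, y⟩ hxy hx
  simp only at hx
  subst hx
  have key : ∀ v : A.domain, ⟪y, (v : E)⟫_ℂ = 0 := by
    intro v
    have hsub : closure (A.graph : Set (E × E)) ⊆
        {z : E × E | ⟪z.2, (v : E)⟫_ℂ - ⟪z.1, A v⟫_ℂ = 0} := by
      apply closure_minimal
      · rintro ⟨a, b⟩ hab
        rcases A.mem_graph_iff.mp hab with ⟨u, hu1, hu2⟩
        simp only [Set.mem_setOf_eq]
        simp only [] at hu1 hu2
        rw [← hu1, ← hu2, hsym u v, sub_self]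
      · exact isClosed_eq
          ((continuous_inner.comp (continuous_snd.prodMk continuous_const)).sub
            (continuous_inner.comp (continuous_fst.prodMk continuous_const)))
          continuous_const
    have hmem : ((0 : E), y) ∈ closure (A.graph : Set (E × E)) := by
      rwa [← Submodule.topologicalClosure_coe]
    simpa using hsub hmem
  exact hd.eq_zero_of_inner_left ℂ (fun v hv => key ⟨v, hv⟩)


lemma isFormalAdjoint_self_of_isSelfAdjoint [CompleteSpace E] {A : E →ₗ.[ℂ] E}
    (hA : IsSelfAdjoint A) : A.IsFormalAdjoint A := by
  have h := LinearPMap.adjoint_isFormalAdjoint hA.dense_domain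
  rwa [LinearPMap.isSelfAdjoint_def.mp hA] at h

lemma closure_symmetric [CompleteSpace E] {A : E →ₗ.[ℂ] E}
    (hd : Dense (A.domain : Set E)) (hsym : A.IsFormalAdjoint A) :
    A.closure.IsFormalAdjoint A.closure := by
  have hA := isClosable_of_symmetric hd hsym
  have step1 : ∀ (x : A.closure.domain) (v : A.domain),
      ⟪A.closure x, (v : E)⟫_ℂ = ⟪(x : E), A v⟫_ℂ := by
    intro x v
    have h := vanish_on_closure A hA
      (fun z => ⟪z.2, (v : E)⟫_ℂ - ⟪z.1, A v⟫_ℂ)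
      ((continuous_inner.comp (continuous_snd.prodMk continuous_const)).sub
        (continuous_inner.comp (continuous_fst.prodMk continuous_const)))
      (fun u => sub_eq_zero.mpr (hsym u v)) x
    exact sub_eq_zero.mp h
  intro x y
  have h := vanish_on_closure A hA
    (fun z => ⟪(A.closure x : E), z.1⟫_ℂ - ⟪(x : E), z.2⟫_ℂ)
    ((continuous_inner.comp (continuous_const.prodMk continuous_fst)).sub
      (continuous_inner.comp (continuous_const.prodMk continuous_snd)))
    (fun v => sub_eq_zero.mpr (step1 x v)) y
  exact sub_eq_zero.mp h

lemma norm_bounds {A : E →ₗ.[ℂ] E} (hsym : A.IsFormalAdjoint A) {μ : ℂ}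
    (hμ : starRingEnd ℂ μ = -μ) (hμ1 : ‖μ‖ = 1) (x : A.domain) :
    ‖(x : E)‖ ≤ ‖A x + μ • (x : E)‖ ∧ ‖A x‖ ≤ ‖A x + μ • (x : E)‖ := by
  have ht : starRingEnd ℂ ⟪A x, (x : E)⟫_ℂ = ⟪A x, (x : E)⟫_ℂ := by
    rw [inner_conj_symm]
    exact (hsym x x).symm
  have hre : Complex.re ⟪A x, μ • (x : E)⟫_ℂ = 0 := by
    have h1 : ⟪A x, μ • (x : E)⟫_ℂ = μ * ⟪A x, (x : E)⟫_ℂ := inner_smul_right _ _ _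
    have h2 : starRingEnd ℂ (μ * ⟪A x, (x : E)⟫_ℂ) = -(μ * ⟪A x, (x : E)⟫_ℂ) := by
      rw [map_mul, ht, hμ]; ring
    have h3 := Complex.add_conj (μ * ⟪A x, (x : E)⟫_ℂ)
    rw [h2, add_neg_cancel] at h3
    have h4 : ((2 * (μ * ⟪A x, (x : E)⟫_ℂ).re : ℝ) : ℂ) = 0 := h3.symm
    have h5 : (2 * (μ * ⟪A x, (x : E)⟫_ℂ).re : ℝ) = 0 := by exact_mod_cast h4
    rw [h1]
    linarith
  have hsq : ‖A x + μ • (x : E)‖ ^ 2 = ‖A x‖ ^ 2 + ‖(x : E)‖ ^ 2 := by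
    have := @norm_add_sq ℂ E _ _ _ (A x) (μ • (x : E))
    rw [this]
    have : RCLike.re ⟪A x, μ • (x : E)⟫_ℂ = (0 : ℝ) := hre
    rw [this, norm_smul, hμ1]
    ring
  constructor
  · nlinarith [norm_nonneg ((x : E)), norm_nonneg (A x + μ • (x : E)), norm_nonneg (A x)]
  · nlinarith [norm_nonneg ((x : E)), norm_nonneg (A x + μ • (x : E)), norm_nonneg (A x)]


lemma surj_of_dense_range [CompleteSpace E] {A : E →ₗ.[ℂ] E} (hcl : A.IsClosed)
    (hsym : A.IsFormalAdjoint A) {μ : ℂ} (hμ : starRingEnd ℂ μ = -μ) (hμ1 : ‖μ‖ = 1)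
    (hdr : Dense (Set.range fun x : A.domain => A x + μ • (x : E))) (η : E) :
    ∃ x : A.domain, A x + μ • (x : E) = η := by
  have hη : η ∈ closure (Set.range fun x : A.domain => A x + μ • (x : E)) := by
    rw [hdr.closure_eq]; trivial
  obtain ⟨z, hz_mem, hz_lim⟩ := mem_closure_iff_seq_limit.mp hη
  choose x hx using hz_mem
  -- key estimate
  have key : ∀ m n : ℕ, ‖(x m : E) - (x n : E)‖ ≤ ‖z m - z n‖ ∧
      ‖A (x m) - A (x n)‖ ≤ ‖z m - z n‖ := by
    intro m n
    have h := norm_bounds hsym hμ hμ1 (x m - x n)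
    have hco : ((x m - x n : A.domain) : E) = (x m : E) - (x n : E) := rfl
    have hA : A (x m - x n) = A (x m) - A (x n) := map_sub A.toFun _ _
    have hval : A (x m - x n) + μ • ((x m - x n : A.domain) : E) = z m - z n := by
      rw [hA, hco, ← hx m, ← hx n]
      simp only [smul_sub]
      abel
    rw [hval, hco, hA] at h
    exact h
  have hzc : CauchySeq z := hz_lim.cauchySeq
  have hxc : CauchySeq fun n => (x n : E) := by
    rw [Metric.cauchySeq_iff] at hzc ⊢
    intro ε hε
    obtain ⟨N, hN⟩ := hzc ε hε
    exact ⟨N, fun m hm n hn => lt_of_le_of_lt (by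
      rw [dist_eq_norm, dist_eq_norm] at *
      exact (key m n).1) (hN m hm n hn)⟩
  have hAc : CauchySeq fun n => A (x n) := by
    rw [Metric.cauchySeq_iff] at hzc ⊢
    intro ε hε
    obtain ⟨N, hN⟩ := hzc ε hε
    exact ⟨N, fun m hm n hn => lt_of_le_of_lt (by
      rw [dist_eq_norm, dist_eq_norm] at *
      exact (key m n).2) (hN m hm n hn)⟩
  obtain ⟨a, ha⟩ := cauchySeq_tendsto_of_complete hxc
  obtain ⟨w, hw⟩ := cauchySeq_tendsto_of_complete hAc
  have hgraph : (a, w) ∈ A.graph := by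
    have : ∀ n, ((x n : E), A (x n)) ∈ (A.graph : Set (E × E)) := fun n => A.mem_graph (x n)
    exact hcl.mem_of_tendsto (ha.prodMk_nhds hw) (Eventually.of_forall this)
  rcases A.mem_graph_iff.mp hgraph with ⟨y, hy1, hy2⟩
  refine ⟨y, ?_⟩
  have hlim : Tendsto (fun n => A (x n) + μ • (x n : E)) atTop (𝓝 (w + μ • a)) :=
    hw.add (ha.const_smul μ)
  have hlim2 : Tendsto (fun n => A (x n) + μ • (x n : E)) atTop (𝓝 η) := by
    have : (fun n => A (x n) + μ • (x n : E)) = z := funext hx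
    rw [this]; exact hz_lim
  rw [hy1, hy2]
  exact tendsto_nhds_unique hlim hlim2

lemma dense_range_selfAdjoint [CompleteSpace E] {A : E →ₗ.[ℂ] E} (hA : IsSelfAdjoint A)
    {μ : ℂ} (hμ : starRingEnd ℂ μ = -μ) (hμ0 : μ ≠ 0) :
    Dense (Set.range fun x : A.domain => A x + μ • (x : E)) := by
  have hd : Dense (A.domain : Set E) := hA.dense_domain
  set K : Submodule ℂ E := LinearMap.range (A.toFun + μ • A.domain.subtype) with hK
  have hbot : Kᗮ = ⊥ := by
    rw [Submodule.eq_bot_iff]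
    intro v hv
    have hv' : ∀ u : A.domain, ⟪A u + μ • (u : E), v⟫_ℂ = 0 := by
      intro u
      refine (Submodule.mem_orthogonal K v).mp hv _ ⟨u, rfl⟩
    have hw : ∀ u : A.domain, ⟪(-(starRingEnd ℂ μ)) • v, (u : E)⟫_ℂ = ⟪v, A u⟫_ℂ := by
      intro u
      have h0 := hv' u
      rw [inner_add_left, inner_smul_left] at h0
      have h1 : ⟪v, A u⟫_ℂ = starRingEnd ℂ ⟪A u, v⟫_ℂ := (inner_conj_symm _ _).symm
      have h2 : ⟪A u, v⟫_ℂ = -(starRingEnd ℂ μ * ⟪(u : E), v⟫_ℂ) := by linear_combination h0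
      have h3 : starRingEnd ℂ ⟪(u : E), v⟫_ℂ = ⟪v, (u : E)⟫_ℂ := inner_conj_symm _ _
      rw [inner_smul_left, h1, h2]
      simp only [_root_.map_neg, _root_.map_mul, Complex.conj_conj, h3]
      ring
    have hvdom : v ∈ A.adjoint.domain :=
      LinearPMap.mem_adjoint_domain_of_exists v ⟨_, hw⟩
    have hval : A.adjoint ⟨v, hvdom⟩ = (-(starRingEnd ℂ μ)) • v :=
      LinearPMap.adjoint_apply_eq hd _ hw
    have heq : A.adjoint = A := LinearPMap.isSelfAdjoint_def.mp hA
    have hvA : v ∈ A.domain := heq ▸ hvdom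
    have hle : A.adjoint ≤ A := le_of_eq heq
    have hAv : A ⟨v, hvA⟩ = (-(starRingEnd ℂ μ)) • v := by
      rw [← hval]
      exact (hle.2 (x := ⟨v, hvdom⟩) (y := ⟨v, hvA⟩) rfl).symm
    have hsym : A.IsFormalAdjoint A := isFormalAdjoint_self_of_isSelfAdjoint hA
    have hs := hsym ⟨v, hvA⟩ ⟨v, hvA⟩
    rw [hAv, inner_smul_left, inner_smul_right, _root_.map_neg, Complex.conj_conj, hμ] at hs
    have hinner : ⟪v, v⟫_ℂ = 0 := by
      have h2 : (2 : ℂ) * μ * ⟪v, v⟫_ℂ = 0 := by linear_combination -hs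
      rcases mul_eq_zero.mp h2 with h | h
      · rcases mul_eq_zero.mp h with h' | h'
        · norm_num at h'
        · exact absurd h' hμ0
      · exact h
    exact inner_self_eq_zero.mp hinner
  have htop : K.topologicalClosure = ⊤ := Submodule.topologicalClosure_eq_top_iff.mpr hbot
  have hcl : closure (K : Set E) = Set.univ := by
    have h := congrArg (fun S : Submodule ℂ E => (S : Set E)) htop
    simpa [Submodule.topologicalClosure_coe] using h
  have : Dense (K : Set E) := dense_iff_closure_eq.mpr hcl
  exact this


end Stmt8Aux

open Stmt8Aux

/-- Let `H₁ ⊂ H₂ ⊂ ⋯` be an increasing sequence of closed subspaces `p j` of a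
Hilbert space `H` whose union is dense (so that `H` is the Hilbert space completion of
`∪ H_j`), and let `D j` be densely defined self-adjoint operators on `H_j` forming an
inductive system: the (isometric) inclusions intertwine `D j` and `D k` for `j ≤ k`.  Then
the limit operator `D` — defined on the union of the domains by `D η = D_n η` whenever
`η ∈ Dom(D_n)` — is essentially self-adjoint, i.e. its closure is self-adjoint. -/
theorem stmt8 {H : Type*} [NormedAddCommGroup H] [InnerProductSpace ℂ H] [CompleteSpace H]
    (p : ℕ → Submodule ℂ H) (hmono : Monotone p)
    (hclosed : ∀ j, IsClosed (p j : Set H))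
    [∀ j, CompleteSpace (p j)]
    (hdense : Dense ((⨆ j, p j : Submodule ℂ H) : Set H))
    (T : ∀ j, (p j) →ₗ.[ℂ] (p j))
    (hdd : ∀ j, Dense ((T j).domain : Set (p j)))
    (hsa : ∀ j, IsSelfAdjoint (T j))
    (hext : ∀ j k, j ≤ k → ∀ x : (T j).domain,
      ∃ y : (T k).domain, ((y : p k) : H) = ((x : p j) : H)
        ∧ (((T k) y : p k) : H) = (((T j) x : p j) : H))
    (D : H →ₗ.[ℂ] H)
    (hDdom : D.domain = ⨆ j, ((T j).domain.map ((p j).subtype)))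
    (hDval : ∀ (j : ℕ) (x : (T j).domain) (hx : ((x : p j) : H) ∈ D.domain),
      D ⟨((x : p j) : H), hx⟩ = (((T j) x : p j) : H)) :
    IsSelfAdjoint D.closure := by
  classical
  set N : ℕ → Submodule ℂ H := fun j => (T j).domain.map ((p j).subtype) with hN
  have hsymT : ∀ j, (T j).IsFormalAdjoint (T j) :=
    fun j => isFormalAdjoint_self_of_isSelfAdjoint (hsa j)
  have hNmono : Monotone N := by
    intro j k hjk z hz
    obtain ⟨x, hx, rfl⟩ := hz
    obtain ⟨y, hy1, hy2⟩ := hext j k hjk ⟨x, hx⟩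
    exact ⟨(y : p k), y.2, hy1⟩
  -- membership representation
  have hrep : ∀ u : D.domain, ∃ (j : ℕ) (x : (T j).domain),
      ((x : p j) : H) = (u : H) ∧ D u = (((T j) x : p j) : H) := by
    intro u
    have hu : (u : H) ∈ ⨆ j, N j := by rw [← hDdom]; exact u.2
    rw [Submodule.mem_iSup_of_directed _ hNmono.directed_le] at hu
    obtain ⟨j, x, hx, hxe⟩ := hu
    refine ⟨j, ⟨x, hx⟩, hxe, ?_⟩
    have hmem : ((⟨x, hx⟩ : (T j).domain) : p j).val ∈ D.domain := by
      rw [show (((⟨x, hx⟩ : (T j).domain) : p j) : H) = (u : H) from hxe]; exact u.2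
    have h2 := hDval j ⟨x, hx⟩ hmem
    have h3 : (⟨(((⟨x, hx⟩ : (T j).domain) : p j) : H), hmem⟩ : D.domain) = u :=
      Subtype.ext hxe
    rw [← h3]
    exact h2
  -- dense submodule criterion
  have dense_of_contains : ∀ Q : Submodule ℂ H,
      (∀ j, (p j : Set H) ⊆ closure (Q : Set H)) → Dense (Q : Set H) := by
    intro Q hQ
    rw [dense_iff_closure_eq]
    have h1 : (⨆ j, p j) ≤ Q.topologicalClosure := by
      refine iSup_le fun j w hw => ?_
      have := hQ j hw
      rwa [← Submodule.topologicalClosure_coe] at this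
    have h2 : ((⨆ j, p j : Submodule ℂ H) : Set H) ⊆ closure (Q : Set H) := by
      intro z hz
      have := h1 hz
      rwa [← Submodule.topologicalClosure_coe]
    have h3 := closure_mono h2
    rw [hdense.closure_eq, closure_closure] at h3
    exact Set.univ_subset_iff.mp h3
  -- each p j is in the closure of any submodule containing N j (via density of T j domain)
  have pj_sub_closure : ∀ (Q : Submodule ℂ H) (j : ℕ) (B : Set (p j)), Dense B →
      (((↑) : p j → H) '' B) ⊆ (Q : Set H) →
      (p j : Set H) ⊆ closure (Q : Set H) := by
    intro Q j B hB hsub z hz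
    have h1 : z ∈ ((↑) : p j → H) '' closure B := by
      rw [hB.closure_eq]
      exact ⟨⟨z, hz⟩, trivial, rfl⟩
    have h2 := image_closure_subset_closure_image
      (f := ((↑) : p j → H)) (s := B) continuous_subtype_val
    exact closure_mono hsub (h2 h1)
  -- D densely defined
  have hdomdense : Dense (D.domain : Set H) := by
    refine dense_of_contains _ (fun j => pj_sub_closure _ j ((T j).domain : Set (p j)) (hdd j) ?_)
    rintro _ ⟨x, hx, rfl⟩
    rw [hDdom]
    exact le_iSup N j ⟨x, hx, rfl⟩
  -- symmetry of D
  have key : ∀ j k, j ≤ k → ∀ (x : (T j).domain) (y : (T k).domain),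
      ⟪(((T j) x : p j) : H), ((y : p k) : H)⟫_ℂ
        = ⟪((x : p j) : H), (((T k) y : p k) : H)⟫_ℂ := by
    intro j k hjk x y
    obtain ⟨x', hx1, hx2⟩ := hext j k hjk x
    rw [← hx1, ← hx2]
    have h := hsymT k x' y
    rw [Submodule.coe_inner, Submodule.coe_inner] at h
    exact h
  have hsymD : D.IsFormalAdjoint D := by
    intro u v
    obtain ⟨j, x, hx, hDx⟩ := hrep u
    obtain ⟨k, y, hy, hDy⟩ := hrep v
    rw [hDx, hDy, ← hx, ← hy]
    rcases le_total j k with h | h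
    · exact key j k h x y
    · have h2 := congrArg (starRingEnd ℂ) (key k j h y x)
      rw [inner_conj_symm, inner_conj_symm] at h2
      exact h2.symm
  have hclosable : D.IsClosable := isClosable_of_symmetric hdomdense hsymD
  set S := D.closure with hS
  have hDleS : D ≤ S := D.le_closure
  have hSdense : Dense (S.domain : Set H) := hdomdense.mono hDleS.1
  have hSsym : S.IsFormalAdjoint S := closure_symmetric hdomdense hsymD
  have hSclosed : S.IsClosed := hclosable.closure_isClosed
  -- dense range of S + μ for suitable μ
  have hrange : ∀ μ : ℂ, starRingEnd ℂ μ = -μ → μ ≠ 0 →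
      Dense ((LinearMap.range (S.toFun + μ • S.domain.subtype) : Submodule ℂ H) : Set H) := by
    intro μ hμ hμ0
    refine dense_of_contains _ (fun j => pj_sub_closure _ j
      (Set.range fun x : (T j).domain => (T j) x + μ • (x : p j))
      (dense_range_selfAdjoint (hsa j) hμ hμ0) ?_)
    rintro _ ⟨_, ⟨y, rfl⟩, rfl⟩
    have hmemN : ((y : p j) : H) ∈ N j := ⟨(y : p j), y.2, rfl⟩
    have hmemD : ((y : p j) : H) ∈ D.domain := by
      rw [hDdom]; exact le_iSup N j hmemN
    have hval0 : D ⟨((y : p j) : H), hmemD⟩ = (((T j) y : p j) : H) := hDval j y hmemD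
    have hmemS : ((y : p j) : H) ∈ S.domain := hDleS.1 hmemD
    have hSx' : S ⟨((y : p j) : H), hmemS⟩ = (((T j) y : p j) : H) := by
      rw [← hval0]
      exact (hDleS.2 (x := ⟨_, hmemD⟩) (y := ⟨_, hmemS⟩) rfl).symm
    refine ⟨⟨((y : p j) : H), hmemS⟩, ?_⟩
    simp only [LinearMap.add_apply, LinearMap.smul_apply, Submodule.coe_subtype]
    rw [LinearPMap.toFun_eq_coe, hSx']
    push_cast
    ring
  -- the two deficiency parameters
  have hI : starRingEnd ℂ Complex.I = -Complex.I := Complex.conj_I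
  have hnegI : starRingEnd ℂ (-Complex.I) = -(-Complex.I) := by
    rw [_root_.map_neg, Complex.conj_I]
  have hInorm : ‖Complex.I‖ = 1 := by simp
  have hnegInorm : ‖-Complex.I‖ = 1 := by simp
  have hrangeI := hrange Complex.I hI Complex.I_ne_zero
  have hrangenegI := hrange (-Complex.I) hnegI (by simpa using Complex.I_ne_zero)
  have hsetI : ((LinearMap.range (S.toFun + Complex.I • S.domain.subtype) : Submodule ℂ H) : Set H)
      = Set.range fun x : S.domain => S x + Complex.I • (x : H) := by
    ext z
    constructor
    · rintro ⟨u, rfl⟩; exact ⟨u, rfl⟩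
    · rintro ⟨u, rfl⟩; exact ⟨u, rfl⟩
  have hsetnegI : ((LinearMap.range (S.toFun + (-Complex.I) • S.domain.subtype) :
        Submodule ℂ H) : Set H)
      = Set.range fun x : S.domain => S x + (-Complex.I) • (x : H) := by
    ext z
    constructor
    · rintro ⟨u, rfl⟩; exact ⟨u, rfl⟩
    · rintro ⟨u, rfl⟩; exact ⟨u, rfl⟩
  have hsurjnegI : ∀ η, ∃ x : S.domain, S x + (-Complex.I) • (x : H) = η :=
    surj_of_dense_range hSclosed hSsym hnegI hnegInorm (by rw [← hsetnegI]; exact hrangenegI)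
  -- final adjoint argument
  have hadj : S.adjoint.IsFormalAdjoint S := LinearPMap.adjoint_isFormalAdjoint hSdense
  have hle1 : S ≤ S.adjoint := LinearPMap.IsFormalAdjoint.le_adjoint hSdense hSsym
  have claim : ∀ yv : S.adjoint.domain, ∃ hy : (yv : H) ∈ S.domain,
      S ⟨(yv : H), hy⟩ = S.adjoint yv := by
    intro yv
    obtain ⟨x, hxeq⟩ := hsurjnegI (S.adjoint yv + (-Complex.I) • (yv : H))
    have hv0 : (yv : H) - (x : H) = 0 := by
      refine Dense.eq_zero_of_inner_left ℂ hrangeI ?_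
      rintro w ⟨b, rfl⟩
      have hwv : (S.toFun + Complex.I • S.domain.subtype) b = S b + Complex.I • (b : H) := rfl
      have e1 : ⟪(S.adjoint yv : H), (b : H)⟫_ℂ = ⟪(yv : H), S b⟫_ℂ := hadj yv b
      have e2 : ⟪S x, (b : H)⟫_ℂ = ⟪(x : H), S b⟫_ℂ := hSsym x b
      have e3 := congrArg (fun w => ⟪w, (b : H)⟫_ℂ) hxeq
      simp only [inner_add_left, inner_smul_left, _root_.map_neg, Complex.conj_I, neg_neg] at e3
      show ⟪(yv : H) - (x : H), (S.toFun + Complex.I • S.domain.subtype) b⟫_ℂ = 0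
      rw [hwv]
      simp only [inner_sub_left, inner_add_right, inner_smul_right]
      linear_combination -e3 - e1 + e2
    have hyx : (yv : H) = (x : H) := by rwa [sub_eq_zero] at hv0
    refine ⟨hyx ▸ x.2, ?_⟩
    have hsub : (⟨(yv : H), hyx ▸ x.2⟩ : S.domain) = x := Subtype.ext hyx
    rw [hsub]
    have hxeq2 := hxeq
    rw [← hyx] at hxeq2
    exact add_right_cancel hxeq2
  have hle2 : S.adjoint ≤ S := by
    refine ⟨fun z hz => (claim ⟨z, hz⟩).choose, ?_⟩
    intro a b hab
    obtain ⟨hy, hval⟩ := claim a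
    rw [← hval]
    congr 1
    exact Subtype.ext hab
  exact LinearPMap.isSelfAdjoint_def.mpr (le_antisymm hle2 hle1)

end
end

section
/- Let {a_k} be a real sequence with a_k² → ∞ monotonically, and let D² = Σ_{k=1}^∞ a_k² D_k² where each D_k² is a nonnegative self-adjoint operator with discrete spectrum whose nonzero eigenvalues are bounded below by some δ > 0 and have finite multiplicity. Then for any λ < ∞, the spectral projection 1_{[0,λ]}(D²) differs from the projection onto ker(D²) by a finite-rank projection; i.e., D² has only finitely many eigenvalues (with finite multiplicity) in (0, λ]. -/
open Filter

/-- Let `a k` be a real sequence (all `a k ≠ 0`) with `a k ^ 2 → ∞`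
monotonically, and let `D² = Σ_k a_k² D_k²` where the `D_k²` act on disjoint tensor factors,
each `D_k²` having discrete spectrum `{(lam k n)² : n ∈ ℤ}` (indexed with multiplicity,
`lam k 0 = 0`), with nonzero eigenvalues bounded below by `δ > 0` and of finite multiplicity
(encoded by: only finitely many indices `n ≠ 0` with `(lam k n)² ≤ c` for each bound `c`).
The eigenvalues of `D²` are the sums `Σ_k a_k² (lam k (ν k))²` over finitely supported
`ν : ℕ →₀ ℤ`.  Then for every `Λ < ∞` there are only finitely many eigenvalues of `D²`
(counted with multiplicity, i.e. finitely many indices `ν`) in `(0, Λ]`; equivalently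
`1_{[0,Λ]}(D²)` differs from the kernel projection by a finite-rank projection. -/
theorem stmt13 (a : ℕ → ℝ) (ha0 : ∀ k, a k ≠ 0)
    (hmono : Monotone fun k => (a k) ^ 2)
    (hdiv : Tendsto (fun k => (a k) ^ 2) atTop atTop)
    (δ : ℝ) (hδ : 0 < δ)
    (lam : ℕ → ℤ → ℝ) (hlam0 : ∀ k, lam k 0 = 0)
    (hgap : ∀ k (n : ℤ), n ≠ 0 → δ ≤ (lam k n) ^ 2)
    (hdisc : ∀ k (c : ℝ), {n : ℤ | n ≠ 0 ∧ (lam k n) ^ 2 ≤ c}.Finite)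
    (Λ : ℝ) :
    {ν : ℕ →₀ ℤ |
        0 < ∑ k ∈ ν.support, (a k) ^ 2 * (lam k (ν k)) ^ 2 ∧
        ∑ k ∈ ν.support, (a k) ^ 2 * (lam k (ν k)) ^ 2 ≤ Λ}.Finite := by
  obtain ⟨K, hK⟩ := eventually_atTop.mp (hdiv.eventually_ge_atTop (Λ / δ + 1))
  set t : ℕ → Finset ℤ :=
    fun k => insert 0 ((hdisc k (Λ / (a k) ^ 2)).toFinset) with ht
  apply Set.Finite.subset ((Finset.range K).finsupp t).finite_toSet
  intro ν ⟨hpos, hle⟩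
  have hterm : ∀ k, 0 ≤ (a k) ^ 2 * (lam k (ν k)) ^ 2 :=
    fun k => mul_nonneg (sq_nonneg _) (sq_nonneg _)
  have hΛ : 0 < Λ := lt_of_lt_of_le hpos hle
  have hsingle : ∀ k ∈ ν.support, (a k) ^ 2 * (lam k (ν k)) ^ 2 ≤ Λ := by
    intro k hk
    exact le_trans (Finset.single_le_sum (fun i _ => hterm i) hk) hle
  simp only [Finset.mem_coe, Finset.mem_finsupp_iff]
  constructor
  · intro k hk
    rw [Finset.mem_range]
    by_contra hlt
    push_neg at hlt
    have hν : ν k ≠ 0 := Finsupp.mem_support_iff.mp hk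
    have h1 : δ ≤ (lam k (ν k)) ^ 2 := hgap k _ hν
    have h2 : Λ / δ + 1 ≤ (a k) ^ 2 := hK k hlt
    have h3 : (Λ / δ + 1) * δ ≤ (a k) ^ 2 * (lam k (ν k)) ^ 2 :=
      mul_le_mul h2 h1 hδ.le (le_trans (by positivity) h2)
    have h4 : (Λ / δ + 1) * δ = Λ + δ := by field_simp
    have := hsingle k hk
    nlinarith
  · intro k hk
    rw [ht]
    by_cases hν : ν k = 0
    · simp [hν]
    · have hk' : k ∈ ν.support := Finsupp.mem_support_iff.mpr hν
      have h1 := hsingle k hk'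
      have ha : 0 < (a k) ^ 2 :=
        lt_of_le_of_ne (sq_nonneg _) (Ne.symm (pow_ne_zero 2 (ha0 k)))
      simp only [Finset.mem_insert, Set.Finite.mem_toFinset, Set.mem_setOf_eq]
      right
      exact ⟨hν, (le_div_iff₀' ha).mpr h1⟩
end
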